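/- arXiv:2110.08911 — 2 statements merged into one kernel-verified Lean document; each statement's English description precedes it below -/
import Mathlib

section
/- Let m ≥ 1 be an integer, T ≥ 1 a real number, and 0 < c < 1. Then the sum over positive integers k with m | k, rad(k) | m (equivalently k | m^∞), and k > T, of 1/k, is at most (1/(m^{1-c} T^c)) · ∏_{p | m prime} (1 - p^{-(1-c)})^{-1}. -/
open scoped Classical

/-- Tail bound: ∑_{k > T, m | k | m^∞} 1/k ≤ (1/(m^{1-c} T^c)) ∏_{p|m} (1 - p^{-(1-c)})⁻¹. -/
theorem tail_sum_le (m : ℕ) (hm : 1 ≤ m) (T : ℝ) (hT : 1 ≤ T) (c : ℝ)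
    (hc0 : 0 < c) (hc1 : c < 1) :
    (∑' k : ℕ, if m ∣ k ∧ (∀ q : ℕ, q.Prime → q ∣ k → q ∣ m) ∧ T < (k : ℝ)
        then 1 / (k : ℝ) else 0) ≤
      1 / ((m : ℝ) ^ (1 - c) * T ^ c) *
        ∏ p ∈ m.primeFactors, (1 - (p : ℝ) ^ (-(1 - c)))⁻¹ := by
  have hm0 : (0:ℝ) < (m:ℝ) := by exact_mod_cast hm
  have hT0 : (0:ℝ) < T := lt_of_lt_of_le one_pos hT
  have hs1 : (0:ℝ) < 1 - c := by linarith
  set s : Finset ℕ := m.primeFactors with hs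
  -- the completely multiplicative function j ↦ j^{-(1-c)}
  let f : ℕ →* ℝ :=
    { toFun := fun j => (j:ℝ) ^ (-(1-c))
      map_one' := by simp
      map_mul' := fun a b => by
        push_cast
        exact Real.mul_rpow (Nat.cast_nonneg a) (Nat.cast_nonneg b) }
  have hnorm : ∀ {p : ℕ}, p.Prime → ‖f p‖ < 1 := by
    intro p hp
    have h1 : (1:ℝ) < p := by exact_mod_cast hp.one_lt
    have hnn : (0:ℝ) ≤ (p:ℝ) ^ (-(1-c)) := Real.rpow_nonneg (Nat.cast_nonneg p) _
    rw [show ‖f p‖ = |(p:ℝ) ^ (-(1-c))| from rfl, abs_of_nonneg hnn]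
    exact Real.rpow_lt_one_of_one_lt_of_neg h1 (by linarith)
  obtain ⟨hsumnorm, hprod⟩ :=
    EulerProduct.summable_and_hasSum_factoredNumbers_prod_filter_prime_geometric hnorm s
  have hsumf : Summable (fun j : Nat.factoredNumbers s => f j) := hsumnorm.of_norm
  set C : ℝ := T ^ (-c) * (m:ℝ) ^ (-(1-c)) with hC
  have hC0 : 0 ≤ C :=
    mul_nonneg (Real.rpow_nonneg hT0.le _) (Real.rpow_nonneg hm0.le _)
  set F : ℕ → ℝ := Set.indicator (Nat.factoredNumbers s) (fun j => C * f j) with hF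
  have hF0 : ∀ j, 0 ≤ F j := by
    intro j
    refine Set.indicator_nonneg (fun j _ => ?_) j
    exact mul_nonneg hC0 (Real.rpow_nonneg (Nat.cast_nonneg j) _)
  have hFsum : Summable F := by
    rw [hF, ← summable_subtype_iff_indicator]
    exact (hsumf.mul_left C)
  -- the function in the sum
  set g : ℕ → ℝ := fun k =>
    if m ∣ k ∧ (∀ q : ℕ, q.Prime → q ∣ k → q ∣ m) ∧ T < (k : ℝ) then 1 / (k : ℝ) else 0
    with hg
  have hg0 : ∀ k, 0 ≤ g k := by
    intro k
    rw [hg]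
    dsimp only
    split
    · positivity
    · exact le_rfl
  have hinj : Function.Injective (fun j : ℕ => m * j) := fun a b h => by
    exact Nat.eq_of_mul_eq_mul_left hm h
  have hsupp : Function.support g ⊆ Set.range (fun j : ℕ => m * j) := by
    intro k hk
    rw [Function.mem_support, hg] at hk
    dsimp only at hk
    split at hk
    · rename_i h
      obtain ⟨j, hj⟩ := h.1
      exact ⟨j, hj.symm⟩
    · exact absurd rfl hk
  -- pointwise bound
  have hbound : ∀ j : ℕ, g (m * j) ≤ F j := by
    intro j
    rw [hg]
    dsimp only
    split
    · rename_i h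
      obtain ⟨-, hrad, hTk⟩ := h
      have hj0 : j ≠ 0 := by
        rintro rfl
        simp at hTk
        linarith
      have hmem : j ∈ Nat.factoredNumbers s := by
        rw [Nat.mem_factoredNumbers']
        intro p hp hpj
        have hpm : p ∣ m := hrad p hp (hpj.mul_left m)
        exact Nat.mem_primeFactors.mpr ⟨hp, hpm, by omega⟩
      have hj0' : (0:ℝ) < (j:ℝ) := by
        exact_mod_cast Nat.pos_of_ne_zero hj0
      have hmj0 : (0:ℝ) < ((m*j : ℕ) : ℝ) := by
        push_cast; positivity
      have key : (1:ℝ) / ((m*j : ℕ) : ℝ) ≤ C * f j := by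
        have h1 : (1:ℝ) / ((m*j : ℕ) : ℝ) =
            ((m*j : ℕ) : ℝ) ^ (-c) * ((m*j : ℕ) : ℝ) ^ (-(1-c)) := by
          rw [← Real.rpow_add hmj0]
          rw [show -c + -(1-c) = -1 by ring, Real.rpow_neg_one]
          rw [one_div]
        rw [h1]
        have h2 : ((m*j : ℕ) : ℝ) ^ (-c) ≤ T ^ (-c) :=
          Real.rpow_le_rpow_of_nonpos hT0 hTk.le (by linarith)
        have h3 : ((m*j : ℕ) : ℝ) ^ (-(1-c)) = (m:ℝ) ^ (-(1-c)) * f j := by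
          push_cast
          exact Real.mul_rpow hm0.le hj0'.le
        rw [h3, hC]
        have h4 : 0 ≤ (m:ℝ) ^ (-(1-c)) * f j :=
          mul_nonneg (Real.rpow_nonneg hm0.le _) (Real.rpow_nonneg hj0'.le _)
        calc ((m*j : ℕ) : ℝ) ^ (-c) * ((m:ℝ) ^ (-(1-c)) * f j)
            ≤ T ^ (-c) * ((m:ℝ) ^ (-(1-c)) * f j) := by
              exact mul_le_mul_of_nonneg_right h2 h4
          _ = T ^ (-c) * (m:ℝ) ^ (-(1-c)) * f j := by ring
      calc (1:ℝ) / ((m*j : ℕ) : ℝ) ≤ C * f j := key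
        _ = F j := by rw [hF, Set.indicator_of_mem hmem]
    · exact hF0 j
  have hgsum : Summable (fun j => g (m * j)) :=
    Summable.of_nonneg_of_le (fun j => hg0 _) hbound hFsum
  -- rewrite the sum
  rw [show (∑' k : ℕ, if m ∣ k ∧ (∀ q : ℕ, q.Prime → q ∣ k → q ∣ m) ∧ T < (k : ℝ)
        then 1 / (k : ℝ) else 0) = ∑' k, g k from rfl,
     ← hinj.tsum_eq hsupp]
  have hle : (∑' j, g (m * j)) ≤ ∑' j, F j := Summable.tsum_le_tsum hbound hgsum hFsum
  refine hle.trans ?_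
  have hFval : (∑' j, F j) = C * ∏ p ∈ s, (1 - (p : ℝ) ^ (-(1-c)))⁻¹ := by
    rw [hF, ← tsum_subtype]
    rw [tsum_mul_left, hprod.tsum_eq]
    congr 1
    rw [Finset.filter_true_of_mem (fun p hp => Nat.prime_of_mem_primeFactors hp)]
    rfl
  rw [hFval]
  have hCeq : C = 1 / ((m : ℝ) ^ (1 - c) * T ^ c) := by
    rw [hC, Real.rpow_neg hT0.le, Real.rpow_neg hm0.le, one_div, mul_inv, mul_comm]
  rw [hCeq]
end

section
/- Let m ≥ 1 be an integer with ω(m) prime factors, T ≥ 1, and 0 < c < 1. Then ∑_{k > T, m | k | m^∞} 1/k ≤ 2 (1-c)^{-ω(m)} / T^c. -/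
open scoped Classical
open Real Finset

private theorem prime_factor_bound (c : ℝ) (hc0 : 0 < c) (hc1 : c < 1) (p : ℕ) (hp : p.Prime) :
    (1 - (p:ℝ) ^ (-(1-c)))⁻¹ ≤ (p:ℝ) ^ (1-c) / ((1-c) * Real.log p) := by
  have hd : (0:ℝ) < 1 - c := by linarith
  have hp1 : (1:ℝ) < p := by exact_mod_cast hp.one_lt
  have hlog : 0 < Real.log p := Real.log_pos hp1
  have hp0 : (0:ℝ) < p := by positivity
  have hA : (0:ℝ) < (p:ℝ) ^ (1-c) := Real.rpow_pos_of_pos hp0 _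
  have hinv : (p:ℝ) ^ (-(1-c)) = ((p:ℝ) ^ (1-c))⁻¹ := Real.rpow_neg hp0.le _
  set A := (p:ℝ) ^ (1-c) with hAdef
  rw [hinv]
  have hkey : (1-c) * Real.log p * A⁻¹ ≤ 1 - A⁻¹ := by
    have hrw : A⁻¹ = Real.exp (-((1-c) * Real.log p)) := by
      rw [hAdef, ← Real.rpow_neg hp0.le, Real.rpow_def_of_pos hp0]; ring_nf
    rw [hrw]
    have h1 := Real.add_one_le_exp ((1-c) * Real.log p)
    have h2 := Real.exp_pos (-((1-c) * Real.log p))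
    have h3 : Real.exp (-((1-c) * Real.log p)) * Real.exp ((1-c) * Real.log p) = 1 := by
      rw [← Real.exp_add]; simp
    nlinarith
  have hAinv : A * A⁻¹ = 1 := mul_inv_cancel₀ hA.ne'
  have hkey' : (1-c) * Real.log p ≤ A - 1 := by nlinarith
  have hlt1 : (0:ℝ) < 1 - A⁻¹ := by nlinarith [mul_pos (mul_pos hd hlog) (inv_pos.mpr hA)]
  rw [inv_le_iff_one_le_mul₀ hlt1]
  have hrw2 : A / ((1-c) * Real.log p) * (1 - A⁻¹) = (A - 1) / ((1-c) * Real.log p) := by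
    field_simp
  rw [hrw2, le_div_iff₀ (by positivity)]
  linarith

private theorem log_prod_ge (S : Finset ℕ) (hS : ∀ p ∈ S, p.Prime) :
    (1:ℝ)/2 ≤ ∏ p ∈ S, Real.log p := by
  have h1 : ∀ p ∈ S, (if p = 2 then (1:ℝ)/2 else 1) ≤ Real.log p := by
    intro p hp
    by_cases h2 : p = 2
    · simp only [h2, if_pos rfl]
      have := Real.log_two_gt_d9
      norm_num at this ⊢; linarith
    · simp only [if_neg h2]
      have h3 : 3 ≤ p := by have := (hS p hp).two_le; omega
      have he : Real.exp 1 < 3 := by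
        have := Real.exp_one_lt_d9; norm_num at this; linarith
      have h4 : Real.exp 1 < (p:ℝ) := by
        have : (3:ℝ) ≤ p := by exact_mod_cast h3
        linarith
      have := (Real.lt_log_iff_exp_lt (by positivity : (0:ℝ) < (p:ℝ))).mpr h4
      linarith
  calc (1:ℝ)/2 ≤ ∏ p ∈ S, (if p = 2 then (1:ℝ)/2 else 1) := by
        rw [Finset.prod_ite_eq' S 2 (fun _ => (1:ℝ)/2)]
        split <;> norm_num
    _ ≤ ∏ p ∈ S, Real.log p := by
        apply Finset.prod_le_prod
        · intro p _; split <;> norm_num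
        · exact h1

private noncomputable def negRpowHom (d : ℝ) : ℕ →* ℝ where
  toFun n := (n:ℝ) ^ (-d)
  map_one' := by norm_num
  map_mul' a b := by
    push_cast
    exact Real.mul_rpow (Nat.cast_nonneg a) (Nat.cast_nonneg b)

/-- Refined tail bound: ∑_{k > T, m | k | m^∞} 1/k ≤ 2 (1-c)^{-ω(m)} / T^c. -/
theorem tail_sum_le_two (m : ℕ) (hm : 1 ≤ m) (T : ℝ) (hT : 1 ≤ T) (c : ℝ)
    (hc0 : 0 < c) (hc1 : c < 1) :
    (∑' k : ℕ, if m ∣ k ∧ (∀ q : ℕ, q.Prime → q ∣ k → q ∣ m) ∧ T < (k : ℝ)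
        then 1 / (k : ℝ) else 0) ≤
      2 * ((1 - c) ^ m.primeFactors.card)⁻¹ / T ^ c := by
  have hd : (0:ℝ) < 1 - c := by linarith
  have hm0 : m ≠ 0 := by omega
  have hT0 : (0:ℝ) < T := by linarith
  set S := m.primeFactors with hSdef
  set f : ℕ → ℝ := fun n => (n:ℝ) ^ (-(1-c)) with hfdef
  have hf_nonneg : ∀ n, 0 ≤ f n := fun n => Real.rpow_nonneg (Nat.cast_nonneg n) _
  have hf_lt_one : ∀ p : ℕ, p.Prime → f p < 1 := by
    intro p hp
    have hp1 : (1:ℝ) < p := by exact_mod_cast hp.one_lt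
    exact Real.rpow_lt_one_of_one_lt_of_neg hp1 (by linarith)
  have hf_prime : ∀ {p : ℕ}, p.Prime → ‖(negRpowHom (1-c)) p‖ < 1 := by
    intro p hp
    show ‖(p:ℝ) ^ (-(1-c))‖ < 1
    rw [Real.norm_eq_abs, abs_of_nonneg (Real.rpow_nonneg (Nat.cast_nonneg p) _)]
    exact hf_lt_one p hp
  obtain ⟨hsum_norm, hhs⟩ :=
    EulerProduct.summable_and_hasSum_factoredNumbers_prod_filter_prime_geometric
      (f := negRpowHom (1-c)) hf_prime S
  have hfilter : S.filter Nat.Prime = S :=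
    Finset.filter_true_of_mem (fun p hp => Nat.prime_of_mem_primeFactors hp)
  set P : ℝ := ∏ p ∈ S, (1 - f p)⁻¹ with hPdef
  have hhs' : HasSum (fun k : Nat.factoredNumbers S ↦ f k) P := by
    have heq : (∏ p ∈ S with p.Prime, (1 - (negRpowHom (1-c)) p)⁻¹) = P := by
      rw [hfilter]; rfl
    exact heq ▸ hhs
  have hsum_sub : Summable (fun k : Nat.factoredNumbers S ↦ f k) := hhs'.summable
  have hsum_ind : Summable (Set.indicator (Nat.factoredNumbers S) f) :=
    summable_subtype_iff_indicator.mp hsum_sub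
  have hmem : ∀ k : ℕ, (k ∈ Nat.factoredNumbers S ↔
      k ≠ 0 ∧ ∀ q : ℕ, q.Prime → q ∣ k → q ∣ m) := by
    intro k
    rw [Nat.mem_factoredNumbers]
    constructor
    · rintro ⟨h0, h1⟩
      refine ⟨h0, fun q hq hqk => ?_⟩
      have := h1 q ((Nat.mem_primeFactorsList h0).mpr ⟨hq, hqk⟩)
      exact (Nat.mem_primeFactors.mp this).2.1
    · rintro ⟨h0, h1⟩
      refine ⟨h0, fun p hp => ?_⟩
      have hpp := Nat.prime_of_mem_primeFactorsList hp
      have hpd := Nat.dvd_of_mem_primeFactorsList hp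
      exact Nat.mem_primeFactors.mpr ⟨hpp, h1 p hpp hpd, hm0⟩
  set h : ℕ → ℝ := fun k => if m ∣ k ∧ k ∈ Nat.factoredNumbers S then f k else 0 with hhdef
  have hh_nonneg : ∀ k, 0 ≤ h k := by
    intro k; rw [hhdef]; dsimp only; split
    · exact hf_nonneg k
    · exact le_refl 0
  -- pointwise bound
  have hbound : ∀ k : ℕ,
      (if m ∣ k ∧ (∀ q : ℕ, q.Prime → q ∣ k → q ∣ m) ∧ T < (k:ℝ) then 1/(k:ℝ) else 0)
        ≤ (T ^ c)⁻¹ * h k := by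
    intro k
    split
    case isTrue hcond =>
      obtain ⟨h1, h2, h3⟩ := hcond
      have hk0 : k ≠ 0 := by
        rintro rfl; simp only [Nat.cast_zero] at h3; linarith
      have hkfN : k ∈ Nat.factoredNumbers S := (hmem k).mpr ⟨hk0, h2⟩
      have hh : h k = f k := by rw [hhdef]; simp [h1, hkfN]
      rw [hh]
      have hkpos : (0:ℝ) < k := by
        have : 0 < k := Nat.pos_of_ne_zero hk0
        exact_mod_cast this
      have hkT : T ≤ (k:ℝ) := h3.le
      have hsplit : (1:ℝ)/(k:ℝ) = (k:ℝ)^(-c) * f k := by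
        rw [hfdef]; dsimp only
        rw [← Real.rpow_add hkpos, show -c + -(1-c) = (-1:ℝ) by ring,
          Real.rpow_neg_one, one_div]
      rw [hsplit]
      have hk_le : (k:ℝ)^(-c) ≤ T^(-c) :=
        Real.rpow_le_rpow_of_nonpos hT0 hkT (by linarith)
      have hTneg : T^(-c) = (T^c)⁻¹ := Real.rpow_neg hT0.le c
      exact mul_le_mul_of_nonneg_right (hTneg ▸ hk_le) (hf_nonneg k)
    case isFalse =>
      exact mul_nonneg (by positivity) (hh_nonneg k)
  have hsum_h : Summable h := by
    apply Summable.of_nonneg_of_le hh_nonneg _ hsum_ind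
    intro k; rw [hhdef]; dsimp only; split
    case isTrue hc' => rw [Set.indicator_of_mem hc'.2]
    case isFalse => exact Set.indicator_apply_nonneg (fun _ => hf_nonneg k)
  have hsum_bound : Summable (fun k => (T^c)⁻¹ * h k) := hsum_h.mul_left _
  have hsum_g : Summable (fun k : ℕ =>
      if m ∣ k ∧ (∀ q : ℕ, q.Prime → q ∣ k → q ∣ m) ∧ T < (k:ℝ) then 1/(k:ℝ) else 0) := by
    apply Summable.of_nonneg_of_le _ hbound hsum_bound
    intro k; split
    · positivity
    · exact le_refl 0
  -- reindexing: tsum h = f m * P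
  have hinj : Function.Injective (fun j : ℕ => m * j) :=
    fun a b hab => Nat.eq_of_mul_eq_mul_left (Nat.pos_of_ne_zero hm0) hab
  have hsupp : Function.support h ⊆ Set.range (fun j : ℕ => m * j) := by
    intro k hk
    rw [Function.mem_support] at hk
    by_cases hdvd : m ∣ k ∧ k ∈ Nat.factoredNumbers S
    · obtain ⟨j, rfl⟩ := hdvd.1; exact ⟨j, rfl⟩
    · exfalso; apply hk; rw [hhdef]; dsimp only; rw [if_neg hdvd]
  have hre : ∑' j : ℕ, h (m * j) = ∑' k, h k := hinj.tsum_eq hsupp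
  have hterm : ∀ j : ℕ, h (m * j) = f m * Set.indicator (Nat.factoredNumbers S) f j := by
    intro j
    by_cases hj : j ∈ Nat.factoredNumbers S
    · have hmj : m * j ∈ Nat.factoredNumbers S := by
        rw [hmem]
        refine ⟨mul_ne_zero hm0 ((hmem j).mp hj).1, fun q hq hqd => ?_⟩
        rcases (Nat.Prime.dvd_mul hq).mp hqd with h' | h'
        · exact h'
        · exact ((hmem j).mp hj).2 q hq h'
      rw [hhdef]; dsimp only
      rw [if_pos ⟨Dvd.intro j rfl, hmj⟩, Set.indicator_of_mem hj]
      show ((m * j : ℕ):ℝ) ^ (-(1-c)) = (m:ℝ)^(-(1-c)) * (j:ℝ)^(-(1-c))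
      push_cast
      exact Real.mul_rpow (Nat.cast_nonneg m) (Nat.cast_nonneg j)
    · have hmj : m * j ∉ Nat.factoredNumbers S := by
        intro hx; apply hj
        rw [hmem] at hx ⊢
        refine ⟨?_, fun q hq hqd => hx.2 q hq (hqd.mul_left m)⟩
        rintro rfl; exact hx.1 (mul_zero m)
      rw [hhdef]; dsimp only
      rw [if_neg (fun hx => hmj hx.2), Set.indicator_of_notMem hj, mul_zero]
  have htsum_h : ∑' k, h k = f m * P := by
    rw [← hre]
    calc ∑' j : ℕ, h (m * j)
        = ∑' j : ℕ, f m * Set.indicator (Nat.factoredNumbers S) f j := by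
          exact tsum_congr hterm
      _ = f m * ∑' j : ℕ, Set.indicator (Nat.factoredNumbers S) f j := tsum_mul_left
      _ = f m * ∑' k : Nat.factoredNumbers S, f k := by
          rw [← _root_.tsum_subtype]
      _ = f m * P := by rw [hhs'.tsum_eq]
  -- product estimate
  have hSprime : ∀ p ∈ S, p.Prime := fun p hp => Nat.prime_of_mem_primeFactors hp
  have hlogpos : 0 < ∏ p ∈ S, Real.log p := by
    apply Finset.prod_pos
    intro p hp
    exact Real.log_pos (by exact_mod_cast (hSprime p hp).one_lt)
  have hloghalf := log_prod_ge S hSprime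
  set D : ℝ := (1-c)^S.card * ∏ p ∈ S, Real.log p with hDdef
  have hDpos : 0 < D := mul_pos (pow_pos hd _) hlogpos
  have hPle : P ≤ (m:ℝ)^(1-c) / D := by
    have step1 : P ≤ ∏ p ∈ S, (p:ℝ)^(1-c) / ((1-c) * Real.log p) := by
      apply Finset.prod_le_prod
      · intro p hp
        exact inv_nonneg.mpr (by linarith [hf_lt_one p (hSprime p hp)])
      · intro p hp
        exact prime_factor_bound c hc0 hc1 p (hSprime p hp)
    have step2 : ∏ p ∈ S, (p:ℝ)^(1-c) / ((1-c) * Real.log p)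
        = (∏ p ∈ S, (p:ℝ)^(1-c)) / D := by
      rw [hDdef, Finset.prod_div_distrib, Finset.prod_mul_distrib, Finset.prod_const]
    have step3 : ∏ p ∈ S, (p:ℝ)^(1-c) = ((∏ p ∈ S, p : ℕ):ℝ)^(1-c) := by
      push_cast
      exact Real.finset_prod_rpow S _ (fun p _ => Nat.cast_nonneg p) _
    have step4 : ((∏ p ∈ S, p : ℕ):ℝ) ≤ (m:ℝ) := by
      exact_mod_cast Nat.le_of_dvd (Nat.pos_of_ne_zero hm0) (Nat.prod_primeFactors_dvd m)
    have step5 : ((∏ p ∈ S, p : ℕ):ℝ)^(1-c) ≤ (m:ℝ)^(1-c) :=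
      Real.rpow_le_rpow (by positivity) step4 hd.le
    calc P ≤ ∏ p ∈ S, (p:ℝ)^(1-c) / ((1-c) * Real.log p) := step1
      _ = (∏ p ∈ S, (p:ℝ)^(1-c)) / D := step2
      _ = ((∏ p ∈ S, p : ℕ):ℝ)^(1-c) / D := by rw [step3]
      _ ≤ (m:ℝ)^(1-c) / D := by gcongr
  -- combine
  have hfm : f m = ((m:ℝ)^(1-c))⁻¹ := Real.rpow_neg (Nat.cast_nonneg m) _
  have hmpow : (0:ℝ) < (m:ℝ)^(1-c) := by
    have : (0:ℝ) < m := by exact_mod_cast Nat.pos_of_ne_zero hm0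
    positivity
  have h2inv : (∏ p ∈ S, Real.log p)⁻¹ ≤ 2 := by
    rw [inv_le_iff_one_le_mul₀ hlogpos]
    linarith
  have hstep : f m * P ≤ 2 * ((1-c)^S.card)⁻¹ := by
    calc f m * P ≤ f m * ((m:ℝ)^(1-c) / D) :=
          mul_le_mul_of_nonneg_left hPle (hf_nonneg m)
      _ = D⁻¹ := by rw [hfm]; field_simp
      _ = ((1-c)^S.card)⁻¹ * (∏ p ∈ S, Real.log p)⁻¹ := by rw [hDdef, mul_inv]
      _ ≤ ((1-c)^S.card)⁻¹ * 2 :=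
          mul_le_mul_of_nonneg_left h2inv (by positivity)
      _ = 2 * ((1-c)^S.card)⁻¹ := mul_comm _ _
  calc (∑' k : ℕ, if m ∣ k ∧ (∀ q : ℕ, q.Prime → q ∣ k → q ∣ m) ∧ T < (k:ℝ)
          then 1/(k:ℝ) else 0)
      ≤ ∑' k : ℕ, (T^c)⁻¹ * h k := Summable.tsum_le_tsum hbound hsum_g hsum_bound
    _ = (T^c)⁻¹ * ∑' k, h k := tsum_mul_left
    _ = (T^c)⁻¹ * (f m * P) := by rw [htsum_h]
    _ ≤ (T^c)⁻¹ * (2 * ((1-c)^S.card)⁻¹) :=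
        mul_le_mul_of_nonneg_left hstep (by positivity)
    _ = 2 * ((1-c)^S.card)⁻¹ / T^c := by rw [div_eq_mul_inv]; ring
end
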